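/- arXiv:2601.17026 — 14 statements merged into one kernel-verified Lean document; each statement's English description precedes it below -/
import Mathlib

section
/- Max-flow min-cut theorem: in any flow network there exist a flow f and a cut S such that the value of f equals the capacity of S; moreover this common quantity is maximal among the values of all flows and minimal among the capacities of all cuts, i.e. every flow g satisfies |g| ≤ |f| and every cut T satisfies cap(S) ≤ cap(T). -/
open Finset

variable {V : Type*} [Fintype V] [DecidableEq V]

/-- A flow on a network with capacities `c`, source `s` and sink `t`. -/
def IsFlow (c : V → V → ℝ) (s t : V) (f : V → V → ℝ) : Prop :=
  (∀ u v, f u v ≤ c u v) ∧ (∀ u v, f u v = - f v u) ∧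
    ∀ v, v ≠ s → v ≠ t → ∑ u, f u v = 0

/-- The value of a flow: the net flow into the sink. -/
def flowValue (t : V) (f : V → V → ℝ) : ℝ := ∑ v, f v t

/-- A cut: a set of vertices containing the source but not the sink. -/
def IsCut (s t : V) (S : Finset V) : Prop := s ∈ S ∧ t ∉ S

/-- The capacity of a cut. -/
def cutCap (c : V → V → ℝ) (S : Finset V) : ℝ := ∑ v ∈ S, ∑ w ∈ Sᶜ, c v w

set_option linter.unusedSectionVars false in
/-- A double sum of an antisymmetric function over the same index set vanishes. -/
lemma sum_sum_antisymm (g : V → V → ℝ) (hg : ∀ u v, g u v = - g v u) (T : Finset V) :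
    ∑ v ∈ T, ∑ w ∈ T, g v w = 0 := by
  have h1 : ∑ v ∈ T, ∑ w ∈ T, g v w = ∑ v ∈ T, ∑ w ∈ T, g w v := Finset.sum_comm
  have h2 : ∑ v ∈ T, ∑ w ∈ T, g w v = ∑ v ∈ T, ∑ w ∈ T, -(g v w) :=
    Finset.sum_congr rfl fun v _ => Finset.sum_congr rfl fun w _ => hg w v
  have h3 : ∑ v ∈ T, ∑ w ∈ T, -(g v w) = - ∑ v ∈ T, ∑ w ∈ T, g v w := by
    simp [Finset.sum_neg_distrib]
  linarith [h1, h2, h3]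

/-- The value of a flow equals the net flow across any cut. -/
lemma flowValue_eq_cutSum (c : V → V → ℝ) (s t : V) (hst : s ≠ t) (g : V → V → ℝ)
    (hg : IsFlow c s t g) (T : Finset V) (hT : IsCut s t T) :
    flowValue t g = ∑ v ∈ T, ∑ w ∈ Tᶜ, g v w := by
  obtain ⟨hcap, hskew, hcons⟩ := hg
  obtain ⟨hsT, htT⟩ := hT
  have hrow : ∀ v, ∑ w, g v w = - ∑ u, g u v := by
    intro v
    have h : ∑ w, g v w = ∑ w, -(g w v) := Finset.sum_congr rfl fun w _ => hskew v w
    rw [h]; simp [Finset.sum_neg_distrib]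
  have htot : ∑ v, ∑ u, g u v = 0 := by
    rw [Finset.sum_comm]; exact sum_sum_antisymm g hskew univ
  have hs_col : ∑ u, g u s = - ∑ u, g u t := by
    have hsplit := Finset.sum_add_sum_compl ({s, t} : Finset V) (fun v => ∑ u, g u v)
    have h1 : ∑ v ∈ ({s, t} : Finset V), (∑ u, g u v) = (∑ u, g u s) + ∑ u, g u t :=
      Finset.sum_pair hst
    have h2 : ∑ v ∈ ({s, t} : Finset V)ᶜ, (∑ u, g u v) = 0 := by
      refine Finset.sum_eq_zero fun v hv => ?_
      simp only [Finset.mem_compl, Finset.mem_insert, Finset.mem_singleton] at hv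
      push_neg at hv
      exact hcons v hv.1 hv.2
    rw [h1, h2, htot] at hsplit
    linarith
  have hmain : ∑ v ∈ T, ∑ w ∈ Tᶜ, g v w
      = ∑ v ∈ T, (∑ w, g v w) - ∑ v ∈ T, ∑ w ∈ T, g v w := by
    rw [← Finset.sum_sub_distrib]
    refine Finset.sum_congr rfl fun v _ => ?_
    have := Finset.sum_add_sum_compl T (g v)
    linarith
  rw [hmain, sum_sum_antisymm g hskew T]
  have hrows : ∑ v ∈ T, (∑ w, g v w) = - ∑ v ∈ T, (∑ u, g u v) := by
    rw [← Finset.sum_neg_distrib]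
    exact Finset.sum_congr rfl fun v _ => hrow v
  have hsingle : ∑ v ∈ T, (∑ u, g u v) = ∑ u, g u s := by
    refine Finset.sum_eq_single_of_mem s hsT fun v hv hvs => ?_
    exact hcons v hvs (fun h => htT (h ▸ hv))
  rw [hrows, hsingle, hs_col]
  simp [flowValue]

/-- Weak duality: the value of any flow is at most the capacity of any cut. -/
lemma flowValue_le_cutCap (c : V → V → ℝ) (s t : V) (hst : s ≠ t) (g : V → V → ℝ)
    (hg : IsFlow c s t g) (T : Finset V) (hT : IsCut s t T) :
    flowValue t g ≤ cutCap c T := by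
  rw [flowValue_eq_cutSum c s t hst g hg T hT]
  exact Finset.sum_le_sum fun v _ => Finset.sum_le_sum fun w _ => hg.1 v w

/-- An elementary "push" of `μ` units along the edge `(a, b)`. -/
def pushF (a b : V) (μ : ℝ) : V → V → ℝ :=
  fun x y => (if x = a ∧ y = b then μ else 0) - (if x = b ∧ y = a then μ else 0)

set_option linter.unusedSectionVars false in
lemma pushF_skew (a b : V) (μ : ℝ) (x y : V) : pushF a b μ x y = - pushF a b μ y x := by
  unfold pushF
  simp only [show (y = a ∧ x = b) ↔ (x = b ∧ y = a) from and_comm,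
    show (y = b ∧ x = a) ↔ (x = a ∧ y = b) from and_comm]
  ring

lemma pushF_col (a b : V) (hab : a ≠ b) (μ : ℝ) (y : V) :
    ∑ x, pushF a b μ x y = (if y = b then μ else 0) - (if y = a then μ else 0) := by
  unfold pushF
  rw [Finset.sum_sub_distrib]
  congr 1
  · by_cases h : y = b
    · subst h; simp [Finset.sum_ite_eq']
    · simp [h]
  · by_cases h : y = a
    · subst h; simp [Finset.sum_ite_eq', hab]
    · simp [h]

/-- If `v` is reachable from `s` in the residual graph of a flow `f`, then either `v = s`
or there is an "augmenting" antisymmetric function `g` respecting residual capacities,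
conserving at all vertices except `s` and `v`, with positive net inflow at `v`. -/
lemma augment (c : V → V → ℝ) (s t : V) (hc : ∀ u v, 0 ≤ c u v) (f : V → V → ℝ)
    (hf : IsFlow c s t f) (v : V)
    (h : Relation.ReflTransGen (fun a b => f a b < c a b) s v) :
    v = s ∨ ∃ g : V → V → ℝ,
      (∀ x y, g x y = - g y x) ∧
      (∀ x y, f x y + g x y ≤ c x y) ∧
      (∀ x, x ≠ s → x ≠ v → ∑ u, g u x = 0) ∧
      0 < ∑ u, g u v := by
  obtain ⟨hcap, hskew, hcons⟩ := hf
  induction h with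
  | refl => exact Or.inl rfl
  | @tail u w hsu huw ih =>
    by_cases hws : w = s
    · exact Or.inl hws
    right
    rcases ih with hus | ⟨g, hgskew, hgcap, hgcons, hgpos⟩
    · -- base case: a single residual edge from s to w
      subst hus
      have hsw : u ≠ w := fun h => hws h.symm
      set δ := c u w - f u w with hδ
      have hδ0 : 0 < δ := by simp only [hδ]; linarith [huw]
      refine ⟨pushF u w δ, fun x y => pushF_skew u w δ x y, ?_, ?_, ?_⟩
      · intro x y
        unfold pushF
        split_ifs with h1 h2 h2
        · exact absurd (h1.1.symm.trans h2.1) hsw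
        · obtain ⟨rfl, rfl⟩ := h1; linarith
        · obtain ⟨rfl, rfl⟩ := h2; linarith [hcap x y]
        · linarith [hcap x y]
      · intro x hxs hxw
        rw [pushF_col u w hsw δ x]
        simp [hxw, hxs]
      · rw [pushF_col u w hsw δ w]
        simp [hws, hδ0]
    · by_cases hwu : w = u
      · subst hwu; exact ⟨g, hgskew, hgcap, hgcons, hgpos⟩
      -- inductive step: scale the old augmentation and push along the new edge
      have huw' : u ≠ w := fun h => hwu h.symm
      set ρ := c u w - f u w with hρdef
      have hρ : 0 < ρ := by simp only [hρdef]; linarith [huw]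
      set ε := ∑ x, g x u with hεdef
      have hε : 0 < ε := hgpos
      set lam := ρ / (2 * (ρ + ε)) with hlamdef
      have hlam0 : 0 < lam := by positivity
      have hlam1 : lam ≤ 1 := by
        rw [hlamdef, div_le_one (by positivity)]; linarith
      set μ := lam * ε with hμdef
      have hμ0 : 0 < μ := by positivity
      refine ⟨fun x y => lam * g x y + pushF u w μ x y, ?_, ?_, ?_, ?_⟩
      · intro x y
        dsimp only
        rw [hgskew x y, pushF_skew u w μ x y]; ring
      · intro x y
        dsimp only
        by_cases hxy : x = u ∧ y = w
        · obtain ⟨rfl, rfl⟩ := hxy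
          have hpv : pushF x y μ x y = μ := by
            unfold pushF
            simp [huw', hwu]
          rw [hpv]
          have hgle : g x y ≤ ρ := by have := hgcap x y; simp only [hρdef]; linarith
          have key : lam * (g x y + ε) ≤ lam * (ρ + ε) :=
            mul_le_mul_of_nonneg_left (by linarith) hlam0.le
          have heq : lam * (ρ + ε) = ρ / 2 := by
            rw [hlamdef]; field_simp
          nlinarith [key, heq, hρ, hμdef, hρdef]
        · have hple : pushF u w μ x y ≤ 0 := by
            unfold pushF
            split_ifs with h1 h2 h2 <;> first | exact absurd h1 hxy | linarith
          have hlg : lam * g x y ≤ c x y - f x y := by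
            rcases le_or_gt (g x y) 0 with hgy | hgy
            · have h1 : lam * g x y ≤ 0 := mul_nonpos_of_nonneg_of_nonpos hlam0.le hgy
              have := hcap x y; linarith
            · have h1 : lam * g x y ≤ 1 * g x y := mul_le_mul_of_nonneg_right hlam1 hgy.le
              have := hgcap x y; linarith
          linarith
      · intro x hxs hxw
        dsimp only
        rw [Finset.sum_add_distrib, ← Finset.mul_sum, pushF_col u w huw' μ x]
        by_cases hxu : x = u
        · subst hxu
          rw [← hεdef]
          simp [hxw, hμdef]
        · rw [hgcons x hxs hxu]
          simp [hxw, hxu]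
      · dsimp only
        rw [Finset.sum_add_distrib, ← Finset.mul_sum, pushF_col u w huw' μ w]
        rw [hgcons w hws hwu]
        simp [hwu, hμ0]

/-- There exists a flow of maximal value. -/
lemma exists_max_flow (c : V → V → ℝ) (s t : V) (hc : ∀ u v, 0 ≤ c u v) :
    ∃ f, IsFlow c s t f ∧ ∀ g, IsFlow c s t g → flowValue t g ≤ flowValue t f := by
  have hcont : ∀ u v : V, Continuous fun f : V → V → ℝ => f u v :=
    fun u v => (continuous_apply v).comp (continuous_apply u)
  have hvcont : Continuous fun f : V → V → ℝ => flowValue t f := by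
    unfold flowValue
    exact continuous_finset_sum univ fun v _ => hcont v t
  set K : Set (V → V → ℝ) := {f | IsFlow c s t f} with hK
  have hK0 : (fun _ _ => (0:ℝ)) ∈ K := by
    refine ⟨fun u v => hc u v, fun u v => by norm_num, fun v _ _ => by simp⟩
  have hclosed : IsClosed K := by
    have h1 : IsClosed {f : V → V → ℝ | ∀ u v, f u v ≤ c u v} := by
      have he : {f : V → V → ℝ | ∀ u v, f u v ≤ c u v} =
          ⋂ u, ⋂ v, {f : V → V → ℝ | f u v ≤ c u v} := by
        ext f; simp
      rw [he]
      exact isClosed_iInter fun u => isClosed_iInter fun v =>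
        isClosed_le (hcont u v) continuous_const
    have h2 : IsClosed {f : V → V → ℝ | ∀ u v, f u v = - f v u} := by
      have he : {f : V → V → ℝ | ∀ u v, f u v = - f v u} =
          ⋂ u, ⋂ v, {f : V → V → ℝ | f u v = - f v u} := by
        ext f; simp
      rw [he]
      exact isClosed_iInter fun u => isClosed_iInter fun v =>
        isClosed_eq (hcont u v) (hcont v u).neg
    have h3 : IsClosed {f : V → V → ℝ | ∀ v, v ≠ s → v ≠ t → ∑ u, f u v = 0} := by
      have he : {f : V → V → ℝ | ∀ v, v ≠ s → v ≠ t → ∑ u, f u v = 0} =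
          ⋂ v, {f : V → V → ℝ | v ≠ s → v ≠ t → ∑ u, f u v = 0} := by
        ext f; simp
      rw [he]
      refine isClosed_iInter fun v => ?_
      by_cases hvs : v = s
      · have : {f : V → V → ℝ | v ≠ s → v ≠ t → ∑ u, f u v = 0} = Set.univ := by
          ext f; simp [hvs]
        rw [this]; exact isClosed_univ
      by_cases hvt : v = t
      · have : {f : V → V → ℝ | v ≠ s → v ≠ t → ∑ u, f u v = 0} = Set.univ := by
          ext f; simp [hvt]
        rw [this]; exact isClosed_univ
      have : {f : V → V → ℝ | v ≠ s → v ≠ t → ∑ u, f u v = 0} =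
          {f : V → V → ℝ | ∑ u, f u v = 0} := by
        ext f; simp [hvs, hvt]
      rw [this]
      exact isClosed_eq (continuous_finset_sum univ fun u _ => hcont u v) continuous_const
    have hKe : K = {f : V → V → ℝ | ∀ u v, f u v ≤ c u v} ∩
        ({f | ∀ u v, f u v = - f v u} ∩ {f | ∀ v, v ≠ s → v ≠ t → ∑ u, f u v = 0}) := by
      ext f
      simp only [hK, Set.mem_setOf_eq, Set.mem_inter_iff, IsFlow]
    rw [hKe]
    exact h1.inter (h2.inter h3)
  have hsub : K ⊆ Set.Icc (fun u v => -(c v u)) c := by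
    intro f hf
    obtain ⟨hcap, hskew, _⟩ := hf
    constructor
    · intro u v
      have := hcap v u
      have h2 := hskew u v
      show -(c v u) ≤ f u v
      linarith
    · intro u v
      exact hcap u v
  have hcomp : IsCompact K := IsCompact.of_isClosed_subset isCompact_Icc hclosed hsub
  obtain ⟨f, hfK, hfmax⟩ :=
    hcomp.exists_isMaxOn ⟨_, hK0⟩ hvcont.continuousOn
  exact ⟨f, hfK, fun g hg => hfmax hg⟩

/-- Max-flow min-cut theorem: there exist a flow `f` and a cut `S` with
`|f| = cap S`, `f` of maximal value among flows and `S` of minimal capacity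
among cuts. -/
theorem maxflow_mincut (c : V → V → ℝ) (s t : V) (hst : s ≠ t)
    (hc : ∀ u v, 0 ≤ c u v) :
    ∃ (f : V → V → ℝ) (S : Finset V), IsFlow c s t f ∧ IsCut s t S ∧
      flowValue t f = cutCap c S ∧
      (∀ g, IsFlow c s t g → flowValue t g ≤ flowValue t f) ∧
      (∀ T, IsCut s t T → cutCap c S ≤ cutCap c T) := by
  classical
  obtain ⟨f, hfK, hfmax⟩ := exists_max_flow c s t hc
  set r : V → V → Prop := fun a b => f a b < c a b with hr
  set S : Finset V := univ.filter (fun v => Relation.ReflTransGen r s v) with hS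
  have hmem : ∀ v, v ∈ S ↔ Relation.ReflTransGen r s v := by
    intro v; simp [hS]
  have hsS : s ∈ S := (hmem s).2 Relation.ReflTransGen.refl
  have htS : t ∉ S := by
    intro ht
    have hpath := (hmem t).1 ht
    rcases augment c s t hc f hfK t hpath with hts | ⟨g, hgskew, hgcap, hgcons, hgpos⟩
    · exact hst hts.symm
    · have hf' : IsFlow c s t (fun x y => f x y + g x y) := by
        refine ⟨fun u v => hgcap u v, fun u v => ?_, fun v hvs hvt => ?_⟩
        · dsimp only
          rw [hfK.2.1 u v, hgskew u v]; ring
        · dsimp only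
          rw [Finset.sum_add_distrib, hfK.2.2 v hvs hvt, hgcons v hvs hvt]; ring
      have hle := hfmax _ hf'
      have hval : flowValue t (fun x y => f x y + g x y)
          = flowValue t f + ∑ u, g u t := by
        unfold flowValue
        rw [Finset.sum_add_distrib]
      rw [hval] at hle
      linarith
  have hedge : ∀ v ∈ S, ∀ w, w ∉ S → f v w = c v w := by
    intro v hv w hw
    by_contra hne
    have hlt : f v w < c v w := lt_of_le_of_ne (hfK.1 v w) hne
    exact hw ((hmem w).2 (((hmem v).1 hv).tail hlt))
  have heq : flowValue t f = cutCap c S := by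
    rw [flowValue_eq_cutSum c s t hst f hfK S ⟨hsS, htS⟩]
    exact Finset.sum_congr rfl fun v hv => Finset.sum_congr rfl fun w hw =>
      hedge v hv w (Finset.mem_compl.1 hw)
  refine ⟨f, S, hfK, ⟨hsS, htS⟩, heq, fun g hg => hfmax g hg, fun T hT => ?_⟩
  rw [← heq]
  exact flowValue_le_cutCap c s t hst f hfK T hT
end

section
/- For any flow f and any cut S, the net flow across the cut equals the value of the flow: ∑ v in S, ∑ w in Sᶜ, f v w = |f|. -/
open Finset

variable {V : Type*} [Fintype V] [DecidableEq V]

/-- For any flow `f` and any cut `S`, the net flow across the cut equals the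
value of the flow. -/
theorem flow_across_cut_eq_value (c : V → V → ℝ) (s t : V) (hst : s ≠ t)
    (hc : ∀ u v, 0 ≤ c u v) (f : V → V → ℝ) (hf : IsFlow c s t f)
    (S : Finset V) (hS : IsCut s t S) :
    ∑ v ∈ S, ∑ w ∈ Sᶜ, f v w = flowValue t f := by
  obtain ⟨hcap, hanti, hcons⟩ := hf
  obtain ⟨hsS, htS⟩ := hS
  -- antisymmetric double sums over a square vanish
  have hsq : ∀ T : Finset V, ∑ v ∈ T, ∑ w ∈ T, f v w = 0 := by
    intro T
    have h1 : ∑ v ∈ T, ∑ w ∈ T, f v w = -∑ v ∈ T, ∑ w ∈ T, f v w := by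
      nth_rewrite 2 [Finset.sum_comm]
      rw [← Finset.sum_neg_distrib]
      refine Finset.sum_congr rfl fun v _ => ?_
      rw [← Finset.sum_neg_distrib]
      exact Finset.sum_congr rfl fun w _ => by rw [hanti v w]
    linarith
  -- row sums: ∑ w, f v w = - ∑ u, f u v
  have hrow : ∀ v, ∑ w, f v w = -∑ u, f u v := by
    intro v
    rw [← Finset.sum_neg_distrib]
    exact Finset.sum_congr rfl fun w _ => by rw [hanti v w]
  -- ∑ u, f u s + ∑ u, f u t = 0
  have htot : ∑ u, f u s + ∑ u, f u t = 0 := by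
    have h0 : ∑ v, ∑ u, f u v = 0 := by
      rw [Finset.sum_comm]; exact hsq univ
    have h1 : ∑ v, ∑ u, f u v =
        ∑ v ∈ ({s, t} : Finset V), ∑ u, f u v := by
      refine (Finset.sum_subset (Finset.subset_univ _) fun v _ hv => ?_).symm
      simp only [Finset.mem_insert, Finset.mem_singleton, not_or] at hv
      exact hcons v hv.1 hv.2
    rw [h1, Finset.sum_pair hst] at h0
    exact h0
  -- main computation
  have key : ∑ v ∈ S, ∑ w ∈ Sᶜ, f v w = ∑ v ∈ S, ∑ w, f v w := by
    have : ∑ v ∈ S, ∑ w, f v w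
        = ∑ v ∈ S, (∑ w ∈ S, f v w + ∑ w ∈ Sᶜ, f v w) := by
      refine Finset.sum_congr rfl fun v _ => ?_
      rw [Finset.sum_add_sum_compl]
    rw [this, Finset.sum_add_distrib, hsq S, zero_add]
  have hrows : ∑ v ∈ S, ∑ w, f v w = ∑ w, f s w := by
    refine Finset.sum_eq_single_of_mem s hsS fun v hv hvs => ?_
    rw [hrow, hcons v hvs (fun h => htS (h ▸ hv)), neg_zero]
  rw [key, hrows, hrow, flowValue]
  linarith
end

section
/- If for a flow f the sink t is not residually reachable from the source s, then the set S of vertices residually reachable from s is a cut (s ∈ S, t ∉ S) whose capacity equals the value of f: cap(S) = |f|; consequently f is a maximum flow. -/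
open Finset

variable {V : Type*} [Fintype V] [DecidableEq V]

/-- `b` is residually reachable from `a`: `(a, b)` lies in the
reflexive-transitive closure of the residual-edge relation `0 < c u v - f u v`. -/
def ResReach (c f : V → V → ℝ) (a b : V) : Prop :=
  Relation.ReflTransGen (fun u v => 0 < c u v - f u v) a b

/-- Net flow across any cut equals the flow value. -/
lemma cut_flow_eq (c : V → V → ℝ) (s t : V) (hst : s ≠ t) (g : V → V → ℝ)
    (hg : IsFlow c s t g) (S : Finset V) (hs : s ∈ S) (ht : t ∉ S) :
    ∑ v ∈ S, ∑ w ∈ Sᶜ, g v w = flowValue t g := by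
  obtain ⟨hcap, hanti, hcons⟩ := hg
  have hdiag : ∀ T : Finset V, ∑ v ∈ T, ∑ w ∈ T, g v w = 0 := by
    intro T
    have h1 : ∑ v ∈ T, ∑ w ∈ T, g v w = -∑ v ∈ T, ∑ w ∈ T, g w v := by
      rw [← Finset.sum_neg_distrib]
      refine Finset.sum_congr rfl fun v _ => ?_
      rw [← Finset.sum_neg_distrib]
      exact Finset.sum_congr rfl fun w _ => hanti v w
    rw [Finset.sum_comm (f := fun v w => g w v)] at h1
    linarith
  have hrow : ∀ v, v ≠ s → v ≠ t → ∑ w, g v w = 0 := by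
    intro v hvs hvt
    have h1 : ∑ w, g v w = -∑ w, g w v := by
      rw [← Finset.sum_neg_distrib]
      exact Finset.sum_congr rfl fun w _ => hanti v w
    rw [hcons v hvs hvt] at h1
    simpa using h1
  have hrowt : ∑ w, g t w = -flowValue t g := by
    show ∑ w, g t w = -∑ v, g v t
    rw [← Finset.sum_neg_distrib]
    exact Finset.sum_congr rfl fun w _ => hanti t w
  have hrows : ∑ w, g s w = flowValue t g := by
    have htot : ∑ v, ∑ w, g v w = 0 := hdiag Finset.univ
    have hsub : ∑ v ∈ ({s, t} : Finset V), ∑ w, g v w = ∑ v, ∑ w, g v w := by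
      refine Finset.sum_subset (Finset.subset_univ _) fun v _ hv => ?_
      simp only [Finset.mem_insert, Finset.mem_singleton, not_or] at hv
      exact hrow v hv.1 hv.2
    rw [Finset.sum_pair hst, htot, hrowt] at hsub
    linarith
  have hsplit : ∑ v ∈ S, ∑ w ∈ Sᶜ, g v w
      = ∑ v ∈ S, ∑ w, g v w - ∑ v ∈ S, ∑ w ∈ S, g v w := by
    rw [← Finset.sum_sub_distrib]
    refine Finset.sum_congr rfl fun v _ => ?_
    rw [eq_sub_iff_add_eq, add_comm, Finset.sum_add_sum_compl]
  rw [hsplit, hdiag S, sub_zero]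
  have : ∑ v ∈ S, ∑ w, g v w = ∑ w, g s w := by
    refine Finset.sum_eq_single_of_mem s hs fun v _ hvs => ?_
    exact hrow v hvs (fun h => ht (h ▸ ‹v ∈ S›))
  rw [this, hrows]

open scoped Classical in
/-- If the sink is not residually reachable from the source, the set of
residually reachable vertices is a cut whose capacity equals the flow value,
and hence the flow is maximum. -/
theorem reachable_cut_of_no_augpath (c : V → V → ℝ) (s t : V) (hst : s ≠ t)
    (hc : ∀ u v, 0 ≤ c u v) (f : V → V → ℝ) (hf : IsFlow c s t f)
    (hnr : ¬ ResReach c f s t) :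
    IsCut s t (Finset.univ.filter fun v => ResReach c f s v) ∧
    cutCap c (Finset.univ.filter fun v => ResReach c f s v) = flowValue t f ∧
    (∀ g, IsFlow c s t g → flowValue t g ≤ flowValue t f) := by
  set S := Finset.univ.filter fun v => ResReach c f s v with hS
  have hmem : ∀ v, v ∈ S ↔ ResReach c f s v := by
    intro v; simp [hS]
  have hsS : s ∈ S := (hmem s).2 Relation.ReflTransGen.refl
  have htS : t ∉ S := fun h => hnr ((hmem t).1 h)
  have hcut : IsCut s t S := ⟨hsS, htS⟩
  have hsat : ∀ v ∈ S, ∀ w ∈ Sᶜ, f v w = c v w := by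
    intro v hv w hw
    rw [Finset.mem_compl] at hw
    by_contra hne
    have hlt : f v w < c v w := lt_of_le_of_ne (hf.1 v w) hne
    exact hw ((hmem w).2 (((hmem v).1 hv).tail (by linarith)))
  have hcapeq : cutCap c S = flowValue t f := by
    rw [← cut_flow_eq c s t hst f hf S hsS htS]
    unfold cutCap
    exact Finset.sum_congr rfl fun v hv =>
      Finset.sum_congr rfl fun w hw => (hsat v hv w hw).symm
  refine ⟨hcut, hcapeq, fun g hg => ?_⟩
  rw [← hcapeq, ← cut_flow_eq c s t hst g hg S hsS htS]
  exact Finset.sum_le_sum fun v _ => Finset.sum_le_sum fun w _ => hg.1 v w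
end

section
/- Augmentation along an augmenting path strictly increases the flow value: let f be a flow and v_0 = s, v_1, …, v_k = t a list of pairwise distinct vertices with r_f v_i v_{i+1} > 0 for each i, and let δ = min_i r_f v_i v_{i+1}. Then δ > 0 and the function f' obtained from f by adding δ to f v_i v_{i+1} and subtracting δ from f v_{i+1} v_i for each i (and leaving all other pairs unchanged) is again a flow, with |f'| = |f| + δ. -/
open Finset

variable {V : Type*} [Fintype V] [DecidableEq V]

/-- A residual path from `a` to `b` of length `k` w.r.t. flow `f`:
a list of vertices `a = v 0, v 1, …, v k = b` with positive residual
capacity `c - f` along each consecutive pair. -/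
def IsResidualPath (c f : V → V → ℝ) (a b : V) (k : ℕ) (p : Fin (k + 1) → V) : Prop :=
  p 0 = a ∧ p (Fin.last k) = b ∧
    ∀ i : Fin k, 0 < c (p i.castSucc) (p i.succ) - f (p i.castSucc) (p i.succ)

/-!
Augmenting by `δ` adds `δ` times the unit flow along the path, which is antisymmetric and,
by telescoping, conserved at every vertex other than the endpoints, with value `1` at the sink.
Along an injective path each ordered pair is traversed at most once and never in both
directions, so `δ` times this unit flow respects the residual capacities, i.e. it is a flow in
the residual network; and a flow in the residual network of `f` added to `f` is a flow.
-/

theorem Fin.sum_succ_sub_castSucc {M : Type*} [AddCommGroup M] {k : ℕ} (g : Fin (k + 1) → M) :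
    ∑ i : Fin k, (g i.succ - g i.castSucc) = g (Fin.last k) - g 0 := by
  rw [sum_sub_distrib, sub_eq_sub_iff_add_eq_add, add_comm, ← Fin.sum_univ_succ,
    Fin.sum_univ_castSucc, add_comm]

omit [DecidableEq V] in
theorem IsFlow.add_of_isFlow_residual {c f g : V → V → ℝ} {s t : V} (hf : IsFlow c s t f)
    (hg : IsFlow (c - f) s t g) : IsFlow c s t (f + g) := by
  obtain ⟨hf_cap, hf_anti, hf_cons⟩ := hf
  obtain ⟨hg_cap, hg_anti, hg_cons⟩ := hg
  refine ⟨fun u v => ?_, fun u v => ?_, fun v hvs hvt => ?_⟩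
  · have := hg_cap u v
    simp only [Pi.sub_apply] at this
    simp only [Pi.add_apply]
    linarith
  · simp only [Pi.add_apply, hf_anti u v, hg_anti u v, neg_add]
  · simp only [Pi.add_apply, sum_add_distrib, hf_cons v hvs hvt, hg_cons v hvs hvt, add_zero]

omit [DecidableEq V] in
theorem flowValue_add (t : V) (f g : V → V → ℝ) :
    flowValue t (f + g) = flowValue t f + flowValue t g :=
  sum_add_distrib

omit [DecidableEq V] in
theorem flowValue_smul (t : V) (a : ℝ) (f : V → V → ℝ) :
    flowValue t (a • f) = a * flowValue t f := by
  simp only [flowValue, Pi.smul_apply, smul_eq_mul, mul_sum]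

section PathFlow

variable {k : ℕ} (p : Fin (k + 1) → V)

def pathFlow (x y : V) : ℝ :=
  ∑ i : Fin k, ((if p i.castSucc = x ∧ p i.succ = y then 1 else 0) -
    (if p i.succ = x ∧ p i.castSucc = y then 1 else 0))

omit [Fintype V] in
theorem pathFlow_antisymm (x y : V) : pathFlow p x y = - pathFlow p y x := by
  simp only [pathFlow, ← sum_neg_distrib, neg_sub, and_comm]

theorem sum_pathFlow_left (v : V) :
    ∑ u, pathFlow p u v = (if p (Fin.last k) = v then 1 else 0) - (if p 0 = v then 1 else 0) := by
  rw [← Fin.sum_succ_sub_castSucc (fun j => if p j = v then (1 : ℝ) else 0)]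
  simp only [pathFlow]
  rw [sum_comm]
  refine sum_congr rfl fun i _ => ?_
  simp only [sum_sub_distrib, ite_and, sum_ite_eq, mem_univ, if_true]

omit [Fintype V] in
theorem pathFlow_eq_zero_of_not_edge
    {x y : V} (h : ∀ i : Fin k, ¬(p i.castSucc = x ∧ p i.succ = y) ∧
      ¬(p i.castSucc = y ∧ p i.succ = x)) :
    pathFlow p x y = 0 := by
  refine sum_eq_zero fun i _ => ?_
  rw [if_neg (h i).1, if_neg fun hi => (h i).2 hi.symm, sub_zero]

omit [Fintype V] in
theorem pathFlow_edge (hinj : Function.Injective p) (i : Fin k) :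
    pathFlow p (p i.castSucc) (p i.succ) = 1 := by
  have h_rev : ∀ j : Fin k, ¬(p j.succ = p i.castSucc ∧ p j.castSucc = p i.succ) := by
    simp only [hinj.eq_iff, Fin.ext_iff, Fin.val_succ, Fin.val_castSucc]
    omega
  rw [pathFlow, Fintype.sum_eq_single i fun j hj => ?_]
  · simp [h_rev]
  · rw [if_neg (h_rev j)]
    simp [hinj.eq_iff, hj]

omit [Fintype V] in
theorem pathFlow_reverse_edge (hinj : Function.Injective p) (i : Fin k) :
    pathFlow p (p i.succ) (p i.castSucc) = -1 := by
  rw [pathFlow_antisymm, pathFlow_edge p hinj]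

omit [Fintype V] in
theorem pathFlow_cases (hinj : Function.Injective p) (x y : V) :
    (∃ i : Fin k, p i.castSucc = x ∧ p i.succ = y ∧ pathFlow p x y = 1) ∨
    (∃ i : Fin k, p i.succ = x ∧ p i.castSucc = y ∧ pathFlow p x y = -1) ∨
    ((∀ i : Fin k, ¬(p i.castSucc = x ∧ p i.succ = y) ∧ ¬(p i.castSucc = y ∧ p i.succ = x)) ∧
      pathFlow p x y = 0) := by
  by_cases h_fwd : ∃ i : Fin k, p i.castSucc = x ∧ p i.succ = y
  · obtain ⟨i, rfl, rfl⟩ := h_fwd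
    exact Or.inl ⟨i, rfl, rfl, pathFlow_edge p hinj i⟩
  by_cases h_bwd : ∃ i : Fin k, p i.succ = x ∧ p i.castSucc = y
  · obtain ⟨i, rfl, rfl⟩ := h_bwd
    exact Or.inr (Or.inl ⟨i, rfl, rfl, pathFlow_reverse_edge p hinj i⟩)
  have h_none : ∀ i : Fin k, ¬(p i.castSucc = x ∧ p i.succ = y) ∧
      ¬(p i.castSucc = y ∧ p i.succ = x) :=
    fun i => ⟨fun h => h_fwd ⟨i, h⟩, fun h => h_bwd ⟨i, h.2, h.1⟩⟩
  exact Or.inr (Or.inr ⟨h_none, pathFlow_eq_zero_of_not_edge p h_none⟩)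

theorem flowValue_pathFlow {s t : V} (hst : s ≠ t) (h0 : p 0 = s) (hk : p (Fin.last k) = t) :
    flowValue t (pathFlow p) = 1 := by
  rw [flowValue, sum_pathFlow_left, if_pos hk, if_neg (h0 ▸ hst), sub_zero]

theorem isFlow_residual_smul_pathFlow {c f : V → V → ℝ} {s t : V} {δ : ℝ}
    (hf : ∀ u v, f u v ≤ c u v) (hinj : Function.Injective p) (h0 : p 0 = s)
    (hk : p (Fin.last k) = t) (hδ : 0 ≤ δ)
    (hδ_le : ∀ i : Fin k, δ ≤ c (p i.castSucc) (p i.succ) - f (p i.castSucc) (p i.succ)) :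
    IsFlow (c - f) s t (δ • pathFlow p) := by
  refine ⟨fun u v => ?_, fun u v => ?_, fun v hvs hvt => ?_⟩
  · have := hf u v
    simp only [Pi.smul_apply, Pi.sub_apply, smul_eq_mul]
    rcases pathFlow_cases p hinj u v with ⟨i, rfl, rfl, h⟩ | ⟨i, rfl, rfl, h⟩ | ⟨-, h⟩
    · simpa [h] using hδ_le i
    · rw [h]; linarith
    · rw [h]; linarith
  · simp only [Pi.smul_apply, smul_eq_mul, pathFlow_antisymm p u v, mul_neg]
  · simp only [Pi.smul_apply, smul_eq_mul, ← mul_sum, sum_pathFlow_left]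
    rw [if_neg (hk ▸ Ne.symm hvt), if_neg (h0 ▸ Ne.symm hvs), sub_zero, mul_zero]

omit [Fintype V] in
theorem eq_add_smul_pathFlow {f f' : V → V → ℝ} {δ : ℝ} (hinj : Function.Injective p)
    (h_fwd : ∀ i : Fin k, f' (p i.castSucc) (p i.succ) = f (p i.castSucc) (p i.succ) + δ)
    (h_bwd : ∀ i : Fin k, f' (p i.succ) (p i.castSucc) = f (p i.succ) (p i.castSucc) - δ)
    (h_other : ∀ x y, (∀ i : Fin k,
        ¬(p i.castSucc = x ∧ p i.succ = y) ∧ ¬(p i.castSucc = y ∧ p i.succ = x)) →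
      f' x y = f x y) :
    f' = f + δ • pathFlow p := by
  ext x y
  simp only [Pi.add_apply, Pi.smul_apply, smul_eq_mul]
  rcases pathFlow_cases p hinj x y with ⟨i, rfl, rfl, h⟩ | ⟨i, rfl, rfl, h⟩ | ⟨h_none, h⟩
  · rw [h_fwd, h, mul_one]
  · rw [h_bwd, h, mul_neg_one, sub_eq_add_neg]
  · rw [h_other x y h_none, h, mul_zero, add_zero]

end PathFlow

theorem augment_increases_value_general (c : V → V → ℝ) (s t : V) (hst : s ≠ t)
    (f : V → V → ℝ) (hf : IsFlow c s t f)
    (k : ℕ) (hk : 0 < k) (p : Fin (k + 1) → V)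
    (hp : IsResidualPath c f s t k p) (hinj : Function.Injective p)
    (δ : ℝ)
    (hδ : δ = (Finset.univ : Finset (Fin k)).inf'
      (Finset.univ_nonempty_iff.mpr (Fin.pos_iff_nonempty.mp hk))
      (fun i => c (p i.castSucc) (p i.succ) - f (p i.castSucc) (p i.succ)))
    (f' : V → V → ℝ)
    (hf'fwd : ∀ i : Fin k, f' (p i.castSucc) (p i.succ) = f (p i.castSucc) (p i.succ) + δ)
    (hf'bwd : ∀ i : Fin k, f' (p i.succ) (p i.castSucc) = f (p i.succ) (p i.castSucc) - δ)
    (hf'other : ∀ x y, (∀ i : Fin k,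
        ¬(p i.castSucc = x ∧ p i.succ = y) ∧ ¬(p i.castSucc = y ∧ p i.succ = x)) →
      f' x y = f x y) :
    0 < δ ∧ IsFlow c s t f' ∧ flowValue t f' = flowValue t f + δ := by
  obtain ⟨h0, hlast, h_res⟩ := hp
  have hδ_pos : 0 < δ := hδ ▸ (lt_inf'_iff _).2 fun i _ => h_res i
  have hδ_le : ∀ i : Fin k, δ ≤ c (p i.castSucc) (p i.succ) - f (p i.castSucc) (p i.succ) :=
    fun i => hδ ▸ inf'_le _ (mem_univ i)
  rw [eq_add_smul_pathFlow p hinj hf'fwd hf'bwd hf'other]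
  refine ⟨hδ_pos, hf.add_of_isFlow_residual ?_, ?_⟩
  · exact isFlow_residual_smul_pathFlow p hf.1 hinj h0 hlast hδ_pos.le hδ_le
  · rw [flowValue_add, flowValue_smul, flowValue_pathFlow p hst h0 hlast, mul_one]

/-- Augmenting along an augmenting path of pairwise distinct vertices by the
bottleneck residual capacity `δ` yields a flow whose value is larger by `δ > 0`. -/
theorem augment_increases_value (c : V → V → ℝ) (s t : V) (hst : s ≠ t)
    (hc : ∀ u v, 0 ≤ c u v) (f : V → V → ℝ) (hf : IsFlow c s t f)
    (k : ℕ) (hk : 0 < k) (p : Fin (k + 1) → V)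
    (hp : IsResidualPath c f s t k p) (hinj : Function.Injective p)
    (δ : ℝ)
    (hδ : δ = (Finset.univ : Finset (Fin k)).inf'
      (Finset.univ_nonempty_iff.mpr (Fin.pos_iff_nonempty.mp hk))
      (fun i => c (p i.castSucc) (p i.succ) - f (p i.castSucc) (p i.succ)))
    (f' : V → V → ℝ)
    (hf'fwd : ∀ i : Fin k, f' (p i.castSucc) (p i.succ) = f (p i.castSucc) (p i.succ) + δ)
    (hf'bwd : ∀ i : Fin k, f' (p i.succ) (p i.castSucc) = f (p i.succ) (p i.castSucc) - δ)
    (hf'other : ∀ x y, (∀ i : Fin k,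
        ¬(p i.castSucc = x ∧ p i.succ = y) ∧ ¬(p i.castSucc = y ∧ p i.succ = x)) →
      f' x y = f x y) :
    0 < δ ∧ IsFlow c s t f' ∧ flowValue t f' = flowValue t f + δ :=
  augment_increases_value_general c s t hst f hf k hk p hp hinj δ hδ f' hf'fwd hf'bwd hf'other
end

section
/- A flow f is a maximum flow (i.e. |g| ≤ |f| for every flow g) if and only if there is no augmenting path, i.e. the sink t is not residually reachable from the source s with respect to f. -/
open Finset

variable {V : Type*} [Fintype V] [DecidableEq V]

/-! If `t` is residually reachable from `s`, a small positive multiple of the unit flow along a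
residual walk from `s` to `t` can be added to `f` without violating any capacity, and it raises
the value. Conversely, if `t` is not reachable, the set `S` of residually reachable vertices is
an `s`-`t` cut every edge of which `f` saturates; the value of any flow is the net flow across
`S`, hence at most the capacity of `S`, which is the value of `f`. -/

open Filter Topology

def edgeUnitFlow (a b u v : V) : ℝ :=
  (if u = a ∧ v = b then 1 else 0) - (if u = b ∧ v = a then 1 else 0)

omit [Fintype V] in
lemma edgeUnitFlow_antisymm (a b u v : V) : edgeUnitFlow a b u v = -edgeUnitFlow a b v u := by
  unfold edgeUnitFlow
  split_ifs <;> grind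

lemma sum_edgeUnitFlow (a b v : V) :
    ∑ u, edgeUnitFlow a b u v = (if v = b then 1 else 0) - (if v = a then 1 else 0) := by
  simp only [edgeUnitFlow, sum_sub_distrib, ite_and, sum_ite_eq', mem_univ, if_true]

omit [Fintype V] in
lemma edgeUnitFlow_nonpos_of_ne {a b u v : V} (h : ¬(u = a ∧ v = b)) :
    edgeUnitFlow a b u v ≤ 0 := by
  unfold edgeUnitFlow
  split_ifs <;> grind

theorem Relation.ReflTransGen.exists_unitFlow {r : V → V → Prop} {a b : V}
    (h : Relation.ReflTransGen r a b) :
    ∃ p : V → V → ℝ, (∀ u v, p u v = -p v u) ∧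
      (∀ v, ∑ u, p u v = (if v = b then 1 else 0) - (if v = a then 1 else 0)) ∧
      ∀ u v, 0 < p u v → r u v := by
  induction h with
  | refl => exact ⟨0, by simp, by simp, by simp⟩
  | @tail b c _ hbc ih =>
    obtain ⟨p, hanti, hnet, hpos⟩ := ih
    refine ⟨p + edgeUnitFlow b c, fun u v => ?_, fun v => ?_, fun u v huv => ?_⟩
    · simp only [Pi.add_apply, hanti u v, edgeUnitFlow_antisymm b c u v]
      ring
    · simp only [Pi.add_apply, sum_add_distrib, hnet, sum_edgeUnitFlow]
      ring
    · by_cases hedge : u = b ∧ v = c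
      · exact hedge.1 ▸ hedge.2 ▸ hbc
      · exact hpos u v (by linarith [edgeUnitFlow_nonpos_of_ne hedge, show 0 < p u v + _ from huv])

lemma exists_pos_mul_le {ι : Type*} [Finite ι] {x y : ι → ℝ} (hy : ∀ i, 0 ≤ y i)
    (hxy : ∀ i, 0 < x i → 0 < y i) : ∃ ε > 0, ∀ i, ε * x i ≤ y i := by
  have hev : ∀ᶠ ε in 𝓝[>] (0 : ℝ), ∀ i, ε * x i ≤ y i := by
    refine eventually_all.2 fun i => ?_
    rcases le_or_gt (x i) 0 with hx | hx
    · filter_upwards [self_mem_nhdsWithin] with ε hε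
      exact (mul_nonpos_of_nonneg_of_nonpos (le_of_lt hε) hx).trans (hy i)
    · have hlim : Tendsto (fun ε => ε * x i) (𝓝[>] 0) (𝓝 0) :=
        ((continuous_id.mul continuous_const).tendsto' 0 0 (zero_mul _)).mono_left
          nhdsWithin_le_nhds
      exact (hlim.eventually (gt_mem_nhds (hxy i hx))).mono fun _ => le_of_lt
  obtain ⟨ε, hle, hε⟩ := (hev.and self_mem_nhdsWithin).exists
  exact ⟨ε, hε, hle⟩

omit [DecidableEq V] in
lemma IsFlow.add_mul_of_le_residual {c : V → V → ℝ} {s t : V} {f p : V → V → ℝ}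
    (hf : IsFlow c s t f) (hanti : ∀ u v, p u v = -p v u)
    (hcons : ∀ v, v ≠ s → v ≠ t → ∑ u, p u v = 0) {ε : ℝ}
    (hcap : ∀ u v, ε * p u v ≤ c u v - f u v) :
    IsFlow c s t (fun u v => f u v + ε * p u v) := by
  obtain ⟨-, hfa, hfcons⟩ := hf
  refine ⟨fun u v => by linarith [hcap u v], fun u v => ?_, fun v hs ht => ?_⟩
  · dsimp only
    rw [hfa u v, hanti u v]
    ring
  · rw [sum_add_distrib, ← mul_sum, hfcons v hs ht, hcons v hs ht, mul_zero, add_zero]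

omit [DecidableEq V] in
lemma flowValue_add_mul (t : V) (f p : V → V → ℝ) (ε : ℝ) :
    flowValue t (fun u v => f u v + ε * p u v) = flowValue t f + ε * flowValue t p := by
  simp only [flowValue, sum_add_distrib, mul_sum]

theorem IsFlow.exists_flowValue_lt_of_resReach {c : V → V → ℝ} {s t : V} {f : V → V → ℝ}
    (hst : s ≠ t) (hf : IsFlow c s t f) (h : ResReach c f s t) :
    ∃ g, IsFlow c s t g ∧ flowValue t f < flowValue t g := by
  obtain ⟨p, hanti, hnet, hpos⟩ := Relation.ReflTransGen.exists_unitFlow h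
  -- The walk may repeat edges; this is harmless because `ε` is chosen after `p`.
  obtain ⟨ε, hε, hcap⟩ := exists_pos_mul_le (x := fun e : V × V => p e.1 e.2)
    (y := fun e => c e.1 e.2 - f e.1 e.2) (fun e => sub_nonneg.2 (hf.1 _ _)) (fun e => hpos _ _)
  have hcons : ∀ v, v ≠ s → v ≠ t → ∑ u, p u v = 0 := fun v hs ht => by simp [hnet, hs, ht]
  have hvalue : flowValue t p = 1 := by simp [flowValue, hnet, hst.symm]
  refine ⟨_, hf.add_mul_of_le_residual hanti hcons fun u v => hcap (u, v), ?_⟩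
  rw [flowValue_add_mul, hvalue]
  linarith

omit [Fintype V] [DecidableEq V] in
lemma sum_sum_eq_zero_of_antisymm {e : V → V → ℝ} (he : ∀ u v, e u v = -e v u) (T : Finset V) :
    ∑ u ∈ T, ∑ v ∈ T, e u v = 0 := by
  have h : ∑ u ∈ T, ∑ v ∈ T, e u v = -∑ u ∈ T, ∑ v ∈ T, e u v :=
    calc ∑ u ∈ T, ∑ v ∈ T, e u v = ∑ v ∈ T, ∑ u ∈ T, e u v := sum_comm
      _ = ∑ v ∈ T, ∑ u ∈ T, -e v u :=
        sum_congr rfl fun v _ => sum_congr rfl fun u _ => he u v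
      _ = -∑ u ∈ T, ∑ v ∈ T, e u v := by simp only [sum_neg_distrib]
  linarith

lemma flowValue_eq_sum_cut {e : V → V → ℝ} {s t : V} (hanti : ∀ u v, e u v = -e v u)
    (hcons : ∀ v, v ≠ s → v ≠ t → ∑ u, e u v = 0) {S : Finset V} (hs : s ∈ S) (ht : t ∉ S) :
    flowValue t e = ∑ u ∈ S, ∑ v ∈ Sᶜ, e u v := by
  calc flowValue t e = ∑ v ∈ Sᶜ, ∑ u, e u v := by
        refine (sum_eq_single_of_mem (f := fun v => ∑ u, e u v) t (mem_compl.2 ht)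
          fun v hv hvt => ?_).symm
        exact hcons v (fun hvs => mem_compl.1 hv (hvs ▸ hs)) hvt
    _ = ∑ u, ∑ v ∈ Sᶜ, e u v := sum_comm
    _ = ∑ u ∈ S, ∑ v ∈ Sᶜ, e u v + ∑ u ∈ Sᶜ, ∑ v ∈ Sᶜ, e u v :=
        (sum_add_sum_compl S _).symm
    _ = ∑ u ∈ S, ∑ v ∈ Sᶜ, e u v := by rw [sum_sum_eq_zero_of_antisymm hanti, add_zero]

lemma IsFlow.flowValue_le_cut {c g : V → V → ℝ} {s t : V} (hg : IsFlow c s t g) {S : Finset V}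
    (hs : s ∈ S) (ht : t ∉ S) : flowValue t g ≤ ∑ u ∈ S, ∑ v ∈ Sᶜ, c u v := by
  rw [flowValue_eq_sum_cut hg.2.1 hg.2.2 hs ht]
  gcongr with u _ v _
  exact hg.1 u v

lemma IsFlow.flowValue_eq_cut_of_saturated {c f : V → V → ℝ} {s t : V} (hf : IsFlow c s t f)
    {S : Finset V} (hs : s ∈ S) (ht : t ∉ S) (hsat : ∀ u ∈ S, ∀ v ∉ S, f u v = c u v) :
    flowValue t f = ∑ u ∈ S, ∑ v ∈ Sᶜ, c u v := by
  rw [flowValue_eq_sum_cut hf.2.1 hf.2.2 hs ht]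
  exact sum_congr rfl fun u hu =>
    sum_congr rfl fun v hv => hsat u hu v (mem_compl.1 hv)

omit [Fintype V] [DecidableEq V] in
lemma ResReach.eq_capacity_of_not_resReach {c f : V → V → ℝ} {a u v : V}
    (hu : ResReach c f a u) (hv : ¬ResReach c f a v) (hle : f u v ≤ c u v) : f u v = c u v :=
  le_antisymm hle <| not_lt.1 fun hlt => hv <| Relation.ReflTransGen.tail hu (sub_pos.2 hlt)

theorem maxflow_iff_no_augpath_general (c : V → V → ℝ) (s t : V) (hst : s ≠ t)
    (f : V → V → ℝ) (hf : IsFlow c s t f) :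
    (∀ g, IsFlow c s t g → flowValue t g ≤ flowValue t f) ↔
      ¬ ResReach c f s t := by
  refine ⟨fun hmax hreach => ?_, fun hnr g hg => ?_⟩
  · obtain ⟨g, hg, hlt⟩ := hf.exists_flowValue_lt_of_resReach hst hreach
    exact (hmax g hg).not_gt hlt
  · classical
    let S := univ.filter (ResReach c f s)
    have hs : s ∈ S := mem_filter.2 ⟨mem_univ s, Relation.ReflTransGen.refl⟩
    have ht : t ∉ S := fun h => hnr (mem_filter.1 h).2
    have hsat : ∀ u ∈ S, ∀ v ∉ S, f u v = c u v := fun u hu v hv =>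
      ResReach.eq_capacity_of_not_resReach (mem_filter.1 hu).2
        (fun h => hv (mem_filter.2 ⟨mem_univ v, h⟩)) (hf.1 u v)
    rw [hf.flowValue_eq_cut_of_saturated hs ht hsat]
    exact hg.flowValue_le_cut hs ht

/-- A flow is maximum iff there is no augmenting path, i.e. the sink is not
residually reachable from the source. -/
theorem maxflow_iff_no_augpath (c : V → V → ℝ) (s t : V) (hst : s ≠ t)
    (hc : ∀ u v, 0 ≤ c u v) (f : V → V → ℝ) (hf : IsFlow c s t f) :
    (∀ g, IsFlow c s t g → flowValue t g ≤ flowValue t f) ↔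
      ¬ ResReach c f s t :=
  maxflow_iff_no_augpath_general c s t hst f hf
end

section
/- If a preflow f admits a valid labeling d, then the sink t is not residually reachable from the source s (there is no augmenting path with respect to f). -/
open Finset

variable {V : Type*} [Fintype V] [DecidableEq V]

/-- A preflow: capacity-respecting, antisymmetric, with nonnegative excess at
every vertex other than the source. -/
def IsPreflow (c : V → V → ℝ) (s : V) (f : V → V → ℝ) : Prop :=
  (∀ u v, f u v ≤ c u v) ∧ (∀ u v, f u v = - f v u) ∧
    ∀ v, v ≠ s → 0 ≤ ∑ u, f u v

/-- The excess of `f` at a vertex `v`. -/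
def excess (f : V → V → ℝ) (v : V) : ℝ := ∑ u, f u v

/-- A valid labeling for `f`: `d t = 0`, `d s = card V`, and `d u ≤ d v + 1`
along every residual edge. -/
def IsValidLabeling (c : V → V → ℝ) (s t : V) (f : V → V → ℝ) (d : V → ℕ) : Prop :=
  d t = 0 ∧ d s = Fintype.card V ∧ ∀ u v, 0 < c u v - f u v → d u ≤ d v + 1

/-!
Since `d s = n`, the at most `n - 1` other vertices cannot use all of the `n` labels
`0, …, n - 1`, so some label `k < n` is skipped. A residual edge lowers the label by at most one,
so it cannot leave the set `{v | k < d v}` without landing on the label `k`. That set is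
therefore closed under residual reachability; it contains `s` but not `t`, as `d t = 0 ≤ k`.
-/

theorem exists_lt_card_notMem_range {α : Type*} [Fintype α] (d : α → ℕ) {a : α}
    (ha : Fintype.card α ≤ d a) : ∃ k < Fintype.card α, k ∉ Set.range d := by
  classical
  by_contra! hsurj
  have hsub : insert (d a) (range (Fintype.card α)) ⊆ univ.image d := by
    intro k hk
    rcases mem_insert.1 hk with rfl | hk
    · exact mem_image_of_mem d (mem_univ a)
    · obtain ⟨v, rfl⟩ := hsurj k (mem_range.1 hk)
      exact mem_image_of_mem d (mem_univ v)
  have hda : d a ∉ range (Fintype.card α) := by simpa using ha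
  have := (card_le_card hsub).trans card_image_le
  rw [card_insert_of_notMem hda, card_range, card_univ] at this
  omega

theorem Relation.ReflTransGen.lt_of_notMem_range {α : Type*} {r : α → α → Prop}
    {d : α → ℕ} {k : ℕ} {a b : α} (h : Relation.ReflTransGen r a b)
    (hd : ∀ u v, r u v → d u ≤ d v + 1) (hk : k ∉ Set.range d) (ha : k < d a) : k < d b := by
  induction h with
  | refl => exact ha
  | @tail u v _ huv ih =>
    have hv : d v ≠ k := fun hv => hk ⟨v, hv⟩
    have := hd u v huv
    omega

theorem no_augpath_of_validLabeling_general (c : V → V → ℝ) (s t : V) (f : V → V → ℝ)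
    (d : V → ℕ) (hd : IsValidLabeling c s t f d) :
    ¬ ResReach c f s t := by
  obtain ⟨hdt, hds, hres⟩ := hd
  obtain ⟨k, hkn, hk⟩ := exists_lt_card_notMem_range d hds.ge
  intro hreach
  have := hreach.lt_of_notMem_range hres hk (hds ▸ hkn)
  omega

/-- If a preflow admits a valid labeling, then there is no augmenting path:
the sink is not residually reachable from the source. -/
theorem no_augpath_of_validLabeling (c : V → V → ℝ) (s t : V) (hst : s ≠ t)
    (hc : ∀ u v, 0 ≤ c u v) (f : V → V → ℝ) (hf : IsPreflow c s f)
    (d : V → ℕ) (hd : IsValidLabeling c s t f d) :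
    ¬ ResReach c f s t :=
  no_augpath_of_validLabeling_general c s t f d hd
end

section
/- Correctness of push-relabel at termination: if f is a preflow that admits a valid labeling d, and every vertex v with v ≠ s and v ≠ t has zero excess (e_f v = 0), then f is a flow and f is a maximum flow (|g| ≤ |f| for every flow g). -/
open Finset

variable {V : Type*} [Fintype V] [DecidableEq V]

lemma skew_sum_zero (g : V → V → ℝ) (hg : ∀ u v, g u v = - g v u) (A : Finset V) :
    ∑ u ∈ A, ∑ v ∈ A, g u v = 0 := by
  have h0 : ∑ u ∈ A, ∑ v ∈ A, (g u v + g v u) = 0 := by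
    apply Finset.sum_eq_zero; intro u _
    apply Finset.sum_eq_zero; intro v _
    rw [hg u v]; ring
  have h1 : ∑ u ∈ A, ∑ v ∈ A, (g u v + g v u)
      = ∑ u ∈ A, ∑ v ∈ A, g u v + ∑ u ∈ A, ∑ v ∈ A, g v u := by
    simp [Finset.sum_add_distrib]
  have h2 : ∑ u ∈ A, ∑ v ∈ A, g v u = ∑ u ∈ A, ∑ v ∈ A, g u v := Finset.sum_comm
  linarith

lemma cut_value' (g : V → V → ℝ) (s t : V)
    (hg2 : ∀ u v, g u v = - g v u) (hg3 : ∀ v, v ≠ s → v ≠ t → ∑ u, g u v = 0)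
    (S : Finset V) (hs : s ∈ S) (ht : t ∉ S) :
    (∑ v, g v t) = ∑ u ∈ S, ∑ v ∈ Sᶜ, g u v := by
  have htc : t ∈ Sᶜ := Finset.mem_compl.2 ht
  have h1 : ∑ v ∈ Sᶜ, ∑ u, g u v = ∑ v, g v t := by
    rw [Finset.sum_eq_single t
      (fun v hv hvt => hg3 v (fun h => (Finset.mem_compl.1 hv) (h ▸ hs)) hvt)
      (fun h => absurd htc h)]
  have h2 : ∑ v ∈ Sᶜ, ∑ u, g u v
      = ∑ v ∈ Sᶜ, ∑ u ∈ S, g u v + ∑ v ∈ Sᶜ, ∑ u ∈ Sᶜ, g u v := by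
    rw [← Finset.sum_add_distrib]
    apply Finset.sum_congr rfl
    intro v _
    rw [Finset.sum_add_sum_compl]
  have hz : ∑ v ∈ Sᶜ, ∑ u ∈ Sᶜ, g u v = 0 := by
    rw [Finset.sum_comm]; exact skew_sum_zero g hg2 Sᶜ
  rw [h2, hz, add_zero] at h1
  rw [← h1]
  exact Finset.sum_comm

lemma gap_exists (d : V → ℕ) (s : V) (hds : d s = Fintype.card V) :
    ∃ k, k < Fintype.card V ∧ ∀ v, d v ≠ k := by
  by_contra h
  push_neg at h
  classical
  set n := Fintype.card V with hn
  choose w hw using h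
  have hws : ∀ k (hk : k < n), w k hk ≠ s := by
    intro k hk hks
    have := hw k hk
    rw [hks, hds] at this
    omega
  have hle : n ≤ Fintype.card {v : V // v ≠ s} := by
    have := Fintype.card_le_of_injective
      (fun k : Fin n => (⟨w k.1 k.2, hws k.1 k.2⟩ : {v : V // v ≠ s}))
      (by
        intro a b hab
        have h2 : d (w a.1 a.2) = d (w b.1 b.2) := by
          rw [Subtype.mk.injEq] at hab; rw [hab]
        rw [hw a.1 a.2, hw b.1 b.2] at h2
        exact Fin.ext h2)
    simpa using this
  have hlt : Fintype.card {v : V // v ≠ s} < n :=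
    Fintype.card_subtype_lt (x := s) (by simp)
  omega

/-- Correctness of push-relabel at termination: a preflow with a valid
labeling and zero excess at all non-terminal vertices is a maximum flow. -/
theorem pushRelabel_termination_maxflow (c : V → V → ℝ) (s t : V) (hst : s ≠ t)
    (hc : ∀ u v, 0 ≤ c u v) (f : V → V → ℝ) (hf : IsPreflow c s f)
    (d : V → ℕ) (hd : IsValidLabeling c s t f d)
    (hzero : ∀ v, v ≠ s → v ≠ t → excess f v = 0) :
    IsFlow c s t f ∧ ∀ g, IsFlow c s t g → flowValue t g ≤ flowValue t f := by
  classical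
  obtain ⟨hf1, hf2, _⟩ := hf
  obtain ⟨hdt, hds, hdres⟩ := hd
  have hf3 : ∀ v, v ≠ s → v ≠ t → ∑ u, f u v = 0 := fun v h1 h2 => hzero v h1 h2
  refine ⟨⟨hf1, hf2, hf3⟩, ?_⟩
  obtain ⟨k, hk, hgap⟩ := gap_exists d s hds
  set S : Finset V := Finset.univ.filter (fun v => k < d v) with hS
  have hsS : s ∈ S := by
    simp only [hS, Finset.mem_filter, Finset.mem_univ, true_and]
    omega
  have htS : t ∉ S := by
    simp only [hS, Finset.mem_filter, Finset.mem_univ, true_and, hdt]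
    omega
  have hsat : ∀ u ∈ S, ∀ v ∈ Sᶜ, f u v = c u v := by
    intro u hu v hv
    refine le_antisymm (hf1 u v) ?_
    by_contra hlt
    push_neg at hlt
    have hres : 0 < c u v - f u v := by linarith
    have hdu : k < d u := by
      simpa only [hS, Finset.mem_filter, Finset.mem_univ, true_and] using hu
    have hdv : ¬ k < d v := by
      have := Finset.mem_compl.1 hv
      simpa only [hS, Finset.mem_filter, Finset.mem_univ, true_and] using this
    have := hdres u v hres
    have := hgap v
    omega
  intro g hg
  obtain ⟨hg1, hg2, hg3⟩ := hg
  have ef : flowValue t f = ∑ u ∈ S, ∑ v ∈ Sᶜ, f u v :=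
    cut_value' f s t hf2 hf3 S hsS htS
  have eg : flowValue t g = ∑ u ∈ S, ∑ v ∈ Sᶜ, g u v :=
    cut_value' g s t hg2 hg3 S hsS htS
  rw [ef, eg]
  apply Finset.sum_le_sum
  intro u hu
  apply Finset.sum_le_sum
  intro v hv
  rw [hsat u hu v hv]
  exact hg1 u v
end

section
/- The push operation preserves the preflow property: let f be a preflow, let u ≠ t be a vertex with e_f u > 0, let v be a vertex with r_f u v > 0, and set δ = min (e_f u) (r_f u v). Then the function f' with f' u v = f u v + δ, f' v u = f v u − δ, and f' = f on all other pairs, is again a preflow, and its excesses satisfy e_{f'} u = e_f u − δ and e_{f'} v = e_f v + δ with all other excesses unchanged. -/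
open Finset

variable {V : Type*} [Fintype V] [DecidableEq V]

/-- The push operation preserves the preflow property and transfers `δ` units
of excess from `u` to `v`, leaving all other excesses unchanged. -/
theorem push_preserves_preflow (c : V → V → ℝ) (s t : V) (hst : s ≠ t)
    (hc : ∀ u v, 0 ≤ c u v) (f : V → V → ℝ) (hf : IsPreflow c s f)
    (u : V) (hut : u ≠ t) (hu : 0 < excess f u)
    (v : V) (hr : 0 < c u v - f u v)
    (δ : ℝ) (hδ : δ = min (excess f u) (c u v - f u v))
    (f' : V → V → ℝ)
    (h1 : f' u v = f u v + δ) (h2 : f' v u = f v u - δ)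
    (h3 : ∀ x y, ¬(x = u ∧ y = v) → ¬(x = v ∧ y = u) → f' x y = f x y) :
    IsPreflow c s f' ∧ excess f' u = excess f u - δ ∧
      excess f' v = excess f v + δ ∧
      ∀ w, w ≠ u → w ≠ v → excess f' w = excess f w := by
  obtain ⟨hcap, hskew, hexc⟩ := hf
  have hδpos : 0 < δ := by rw [hδ]; exact lt_min hu hr
  have hδe : δ ≤ excess f u := by rw [hδ]; exact min_le_left _ _
  have hδr : δ ≤ c u v - f u v := by rw [hδ]; exact min_le_right _ _
  have huv : u ≠ v := by
    intro h
    subst h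
    rw [h1] at h2
    linarith
  -- pointwise description of f'
  have hfv : ∀ x, f' x v = f x v + (if x = u then δ else 0) := by
    intro x
    by_cases hx : x = u
    · subst hx; simp [h1]
    · rw [h3 x v (by tauto) (by rintro ⟨rfl, h⟩; exact huv h.symm)]
      simp [hx]
  have hfu : ∀ x, f' x u = f x u - (if x = v then δ else 0) := by
    intro x
    by_cases hx : x = v
    · subst hx; simp [h2]
    · rw [h3 x u (by rintro ⟨rfl, h⟩; exact huv h) (by tauto)]
      simp [hx]
  have hew : ∀ w, w ≠ u → w ≠ v → excess f' w = excess f w := by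
    intro w hwu hwv
    unfold excess
    refine Finset.sum_congr rfl fun x _ => ?_
    exact h3 x w (by tauto) (by tauto)
  have heu : excess f' u = excess f u - δ := by
    unfold excess
    simp [hfu, Finset.sum_sub_distrib]
  have hev : excess f' v = excess f v + δ := by
    unfold excess
    simp [hfv, Finset.sum_add_distrib]
  refine ⟨⟨?_, ?_, ?_⟩, heu, hev, hew⟩
  · intro x y
    by_cases hxy : x = u ∧ y = v
    · obtain ⟨rfl, rfl⟩ := hxy; rw [h1]; linarith
    by_cases hyx : x = v ∧ y = u
    · obtain ⟨rfl, rfl⟩ := hyx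
      rw [h2]
      have := hcap x y
      linarith
    · rw [h3 x y hxy hyx]; exact hcap x y
  · intro x y
    by_cases hxy : x = u ∧ y = v
    · obtain ⟨rfl, rfl⟩ := hxy; rw [h1, h2, hskew x y]; ring
    by_cases hyx : x = v ∧ y = u
    · obtain ⟨rfl, rfl⟩ := hyx; rw [h1, h2, hskew x y]; ring
    · rw [h3 x y hxy hyx, h3 y x (by tauto) (by tauto)]; exact hskew x y
  · intro w hws
    by_cases hwu : w = u
    · subst hwu
      have := heu
      unfold excess at this
      rw [this]
      have h4 : δ ≤ ∑ x, f x w := hδe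
      linarith
    by_cases hwv : w = v
    · subst hwv
      have := hev
      unfold excess at this
      rw [this]
      have := hexc w hws
      linarith
    · have := hew w hwu hwv
      unfold excess at this
      rw [this]
      exact hexc w hws
end

section
/- The push operation preserves valid labelings: let f be a preflow with valid labeling d, let u be a vertex with e_f u > 0, let v be a vertex with r_f u v > 0 and d u = d v + 1, and set δ = min (e_f u) (r_f u v). Then d is still a valid labeling for the updated function f' given by f' u v = f u v + δ, f' v u = f v u − δ, and f' = f elsewhere. -/
open Finset

variable {V : Type*} [Fintype V] [DecidableEq V]

/-- The push operation preserves valid labelings. -/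
theorem push_preserves_validLabeling (c : V → V → ℝ) (s t : V) (hst : s ≠ t)
    (hc : ∀ u v, 0 ≤ c u v) (f : V → V → ℝ) (hf : IsPreflow c s f)
    (d : V → ℕ) (hd : IsValidLabeling c s t f d)
    (u : V) (hu : 0 < excess f u)
    (v : V) (hr : 0 < c u v - f u v) (hlab : d u = d v + 1)
    (δ : ℝ) (hδ : δ = min (excess f u) (c u v - f u v))
    (f' : V → V → ℝ)
    (h1 : f' u v = f u v + δ) (h2 : f' v u = f v u - δ)
    (h3 : ∀ x y, ¬(x = u ∧ y = v) → ¬(x = v ∧ y = u) → f' x y = f x y) :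
    IsValidLabeling c s t f' d := by
  refine ⟨hd.1, hd.2.1, fun a b hab => ?_⟩
  by_cases hav : a = u ∧ b = v
  · rw [hav.1, hav.2]; omega
  by_cases hbu : a = v ∧ b = u
  · rw [hbu.1, hbu.2]; omega
  · rw [h3 a b hav hbu] at hab
    exact hd.2.2 a b hab
end

section
/- The relabel operation preserves validity and strictly increases the label: let f be a preflow with valid labeling d, and let v be a vertex with v ≠ s, v ≠ t, having at least one residual edge out of it, such that d v ≤ d w for every w with r_f v w > 0. Define d' by d' v = (min over w with r_f v w > 0 of d w) + 1 and d' u = d u for u ≠ v. Then d' is a valid labeling for f and d' v > d v. -/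
open Finset

variable {V : Type*} [Fintype V] [DecidableEq V]

open scoped Classical in
/-- The relabel operation preserves validity of the labeling and strictly
increases the label of the relabeled vertex. -/
theorem relabel_preserves_validLabeling (c : V → V → ℝ) (s t : V) (hst : s ≠ t)
    (hc : ∀ u v, 0 ≤ c u v) (f : V → V → ℝ) (hf : IsPreflow c s f)
    (d : V → ℕ) (hd : IsValidLabeling c s t f d)
    (v : V) (hvs : v ≠ s) (hvt : v ≠ t)
    (hres : ∃ w, 0 < c v w - f v w)
    (hmin : ∀ w, 0 < c v w - f v w → d v ≤ d w)
    (d' : V → ℕ)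
    (hd'v : d' v = (Finset.univ.filter fun w => 0 < c v w - f v w).inf'
      (by obtain ⟨w, hw⟩ := hres
          exact ⟨w, Finset.mem_filter.mpr ⟨Finset.mem_univ w, hw⟩⟩) d + 1)
    (hd'other : ∀ u, u ≠ v → d' u = d u) :
    IsValidLabeling c s t f d' ∧ d v < d' v := by
  obtain ⟨hdt, hds, hdr⟩ := hd
  set S := (Finset.univ.filter fun w => 0 < c v w - f v w) with hS
  have hne : S.Nonempty := by
    obtain ⟨w, hw⟩ := hres
    exact ⟨w, Finset.mem_filter.mpr ⟨Finset.mem_univ w, hw⟩⟩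
  have hinf : d v ≤ S.inf' hne d := by
    apply Finset.le_inf'
    intro w hw
    exact hmin w (Finset.mem_filter.mp hw).2
  have hlt : d v < d' v := by
    rw [hd'v]; exact Nat.lt_succ_of_le hinf
  refine ⟨⟨?_, ?_, ?_⟩, hlt⟩
  · rw [hd'other t (Ne.symm hvt)]; exact hdt
  · rw [hd'other s (Ne.symm hvs)]; exact hds
  · intro u w hr
    by_cases hu : u = v
    · subst hu
      have hwS : w ∈ S := Finset.mem_filter.mpr ⟨Finset.mem_univ w, hr⟩
      have h1 : S.inf' hne d ≤ d w := Finset.inf'_le d hwS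
      by_cases hw : w = u
      · subst hw; exact Nat.le_succ _
      · rw [hd'v, hd'other w hw]; exact Nat.succ_le_succ h1
    · rw [hd'other u hu]
      by_cases hw : w = v
      · subst hw
        rw [hd'v]
        exact le_trans (hdr u w hr) (Nat.succ_le_succ (hinf.trans (Nat.le_succ _)))
      · rw [hd'other w hw]
        exact hdr u w hr
end

section
/- From every vertex with positive excess the source is residually reachable: if f is a preflow and v is a vertex with e_f v > 0, then s is residually reachable from v (there is a residual path from v to s). -/
open Finset

variable {V : Type*} [Fintype V] [DecidableEq V]

/-- From every vertex with positive excess, the source is residually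
reachable. -/
theorem source_reachable_of_pos_excess (c : V → V → ℝ) (s t : V) (hst : s ≠ t)
    (hc : ∀ u v, 0 ≤ c u v) (f : V → V → ℝ) (hf : IsPreflow c s f)
    (v : V) (hv : 0 < excess f v) :
    ResReach c f v s := by
    classical
  by_contra hns
  obtain ⟨hcap, hskew, hex⟩ := hf
  set S : Finset V := Finset.univ.filter (fun w => ResReach c f v w) with hS
  have hvS : v ∈ S := by
    simp only [hS, Finset.mem_filter, Finset.mem_univ, true_and]
    exact Relation.ReflTransGen.refl
  have hsS : s ∉ S := by
    simp only [hS, Finset.mem_filter, Finset.mem_univ, true_and]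
    exact hns
  have key : ∀ w ∈ S, ∀ u, u ∉ S → f u w ≤ 0 := by
    intro w hw u hu
    by_contra h
    push_neg at h
    have hres : 0 < c w u - f w u := by
      have h1 := hc w u
      have h2 := hskew w u
      linarith
    apply hu
    simp only [hS, Finset.mem_filter, Finset.mem_univ, true_and] at hw ⊢
    exact hw.tail hres
  have hzero : ∑ w ∈ S, ∑ u ∈ S, f u w = 0 := by
    have h1 : ∑ w ∈ S, ∑ u ∈ S, f u w = ∑ u ∈ S, ∑ w ∈ S, f u w := Finset.sum_comm
    have h2 : ∑ u ∈ S, ∑ w ∈ S, f u w = -∑ w ∈ S, ∑ u ∈ S, f u w := by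
      rw [← Finset.sum_neg_distrib]
      apply Finset.sum_congr rfl
      intro u _
      rw [← Finset.sum_neg_distrib]
      apply Finset.sum_congr rfl
      intro w _
      exact hskew u w
    linarith [h1, h2]
  have hsplit : ∑ w ∈ S, excess f w = ∑ w ∈ S, ∑ u ∈ Sᶜ, f u w := by
    unfold excess
    have : ∀ w, ∑ u, f u w = ∑ u ∈ S, f u w + ∑ u ∈ Sᶜ, f u w := by
      intro w
      rw [Finset.sum_add_sum_compl]
    simp_rw [this, Finset.sum_add_distrib, hzero, zero_add]
  have hle : ∑ w ∈ S, excess f w ≤ 0 := by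
    rw [hsplit]
    apply Finset.sum_nonpos
    intro w hw
    apply Finset.sum_nonpos
    intro u hu
    exact key w hw u (Finset.mem_compl.mp hu)
  have hpos : 0 < ∑ w ∈ S, excess f w := by
    apply Finset.sum_pos'
    · intro w hw
      have hws : w ≠ s := fun h => hsS (h ▸ hw)
      exact hex w hws
    · exact ⟨v, hvS, hv⟩
  linarith
end

section
/- Label bound for active vertices: if f is a preflow with valid labeling d and v is a vertex with e_f v > 0, then d v ≤ 2n − 1, where n = card V. -/
open Finset

variable {V : Type*} [Fintype V] [DecidableEq V]

open Classical in
/-- Vertices reachable from `v` in at most `k` residual steps. -/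
noncomputable def reachSet (c f : V → V → ℝ) (v : V) : ℕ → Finset V
  | 0 => {v}
  | k+1 => reachSet c f v k ∪ Finset.univ.filter
      (fun w => ∃ u ∈ reachSet c f v k, 0 < c u w - f u w)

lemma reachSet_subset_succ (c f : V → V → ℝ) (v : V) (k : ℕ) :
    reachSet c f v k ⊆ reachSet c f v (k+1) := by
  intro x hx; simp [reachSet, hx]

lemma mem_reach_bound (c f : V → V → ℝ) (v : V) (d : V → ℕ)
    (hlab : ∀ u w, 0 < c u w - f u w → d u ≤ d w + 1) :
    ∀ k, ∀ w ∈ reachSet c f v k, d v ≤ d w + k := by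
  intro k
  induction k with
  | zero => intro w hw; simp [reachSet] at hw; simp [hw]
  | succ k ih =>
    intro w hw
    simp only [reachSet, mem_union, mem_filter] at hw
    rcases hw with hw | ⟨-, u, hu, hr⟩
    · exact le_trans (ih w hw) (by omega)
    · have := ih u hu
      have := hlab u w hr
      omega

lemma reach_stabilizes (c f : V → V → ℝ) (v : V) :
    ∃ k < Fintype.card V, reachSet c f v (k+1) = reachSet c f v k := by
  by_contra h
  push_neg at h
  have key : ∀ k ≤ Fintype.card V, k + 1 ≤ (reachSet c f v k).card := by
    intro k hk
    induction k with
    | zero => simp [reachSet]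
    | succ k ih =>
      have h1 : reachSet c f v k ⊂ reachSet c f v (k+1) :=
        Finset.ssubset_iff_subset_ne.2
          ⟨reachSet_subset_succ c f v k, (h k (by omega)).symm⟩
      have := Finset.card_lt_card h1
      have := ih (by omega)
      omega
  have := key (Fintype.card V) (le_refl _)
  have := Finset.card_le_univ (reachSet c f v (Fintype.card V))
  omega

lemma source_mem_closed (c : V → V → ℝ) (s : V) (f : V → V → ℝ)
    (hc : ∀ u v, 0 ≤ c u v)
    (hskew : ∀ u v, f u v = - f v u)
    (hex : ∀ v, v ≠ s → 0 ≤ ∑ u, f u v)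
    (A : Finset V) (hclosed : ∀ u ∈ A, ∀ w, 0 < c u w - f u w → w ∈ A)
    (v : V) (hvA : v ∈ A) (hv : 0 < ∑ u, f u v) : s ∈ A := by
  by_contra hs
  have hpos : 0 < ∑ u ∈ A, ∑ x, f x u := by
    apply Finset.sum_pos' (fun u hu => hex u (fun h => hs (h ▸ hu)))
    exact ⟨v, hvA, hv⟩
  have hsplit : ∀ u, ∑ x, f x u = ∑ x ∈ A, f x u + ∑ x ∈ Aᶜ, f x u := by
    intro u
    rw [← Finset.sum_add_sum_compl A]
  have h1 : ∑ u ∈ A, ∑ x ∈ A, f x u = 0 := by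
    have : ∑ u ∈ A, ∑ x ∈ A, f x u = - ∑ u ∈ A, ∑ x ∈ A, f x u := by
      calc ∑ u ∈ A, ∑ x ∈ A, f x u = ∑ x ∈ A, ∑ u ∈ A, f x u := by rw [Finset.sum_comm]
        _ = ∑ x ∈ A, ∑ u ∈ A, - f u x := by
            apply Finset.sum_congr rfl; intro x _
            apply Finset.sum_congr rfl; intro u _
            exact hskew x u
        _ = - ∑ x ∈ A, ∑ u ∈ A, f u x := by
            simp [Finset.sum_neg_distrib]
        _ = - ∑ u ∈ A, ∑ x ∈ A, f x u := by rw [Finset.sum_comm]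
    linarith
  have h2 : ∑ u ∈ A, ∑ x ∈ Aᶜ, f x u ≤ 0 := by
    apply Finset.sum_nonpos; intro u hu
    apply Finset.sum_nonpos; intro x hx
    by_contra hpos'
    push_neg at hpos'
    have hr : 0 < c u x - f u x := by
      have : f u x = - f x u := hskew u x
      have := hc u x
      linarith
    exact (Finset.mem_compl.mp hx) (hclosed u hu x hr)
  have htot : ∑ u ∈ A, ∑ x, f x u = ∑ u ∈ A, ∑ x ∈ A, f x u + ∑ u ∈ A, ∑ x ∈ Aᶜ, f x u := by
    rw [← Finset.sum_add_distrib]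
    exact Finset.sum_congr rfl fun u _ => hsplit u
  linarith

/-- Label bound for active vertices : any vertex with positive excess has label
at most `2 n - 1`. -/
theorem label_le_of_pos_excess (c : V → V → ℝ) (s t : V) (hst : s ≠ t)
    (hc : ∀ u v, 0 ≤ c u v) (f : V → V → ℝ) (hf : IsPreflow c s f)
    (d : V → ℕ) (hd : IsValidLabeling c s t f d)
    (v : V) (hv : 0 < excess f v) :
    d v ≤ 2 * Fintype.card V - 1 := by
  obtain ⟨hcap, hskew, hex⟩ := hf
  obtain ⟨hdt, hds, hlab⟩ := hd
  obtain ⟨k, hk, hstab⟩ := reach_stabilizes c f v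
  have hclosed : ∀ u ∈ reachSet c f v k, ∀ w, 0 < c u w - f u w → w ∈ reachSet c f v k := by
    intro u hu w hr
    rw [← hstab]
    simp only [reachSet, mem_union, mem_filter]
    exact Or.inr ⟨mem_univ w, u, hu, hr⟩
  have hvA' : ∀ m, v ∈ reachSet c f v m := by
    intro m
    induction m with
    | zero => simp [reachSet]
    | succ m ih => exact reachSet_subset_succ c f v m ih
  have hvA := hvA' k
  have hsA : s ∈ reachSet c f v k :=
    source_mem_closed c s f hc hskew hex _ hclosed v hvA hv
  have hbound := mem_reach_bound c f v d hlab k s hsA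
  have hcard : 1 ≤ Fintype.card V := Fintype.card_pos_iff.2 ⟨v⟩
  omega
end

section
/- Gap relabeling lemma: let f be a preflow with valid labeling d and let g be an integer with 0 < g < n such that no vertex u has d u = g. Then for every vertex v with g < d v < n, the sink t is not residually reachable from v. -/
open Finset

variable {V : Type*} [Fintype V] [DecidableEq V]

/-- Gap relabeling lemma: if no vertex has label `g`, with `0 < g < n`, then
the sink is not residually reachable from any vertex whose label lies strictly
between `g` and `n`. -/
theorem gap_relabeling (c : V → V → ℝ) (s t : V) (hst : s ≠ t)
    (hc : ∀ u v, 0 ≤ c u v) (f : V → V → ℝ) (hf : IsPreflow c s f)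
    (d : V → ℕ) (hd : IsValidLabeling c s t f d)
    (g : ℕ) (hg0 : 0 < g) (hgn : g < Fintype.card V)
    (hgap : ∀ u, d u ≠ g) :
    ∀ v, g < d v → d v < Fintype.card V → ¬ ResReach c f v t := by
  obtain ⟨hdt, hds, hvalid⟩ := hd
  intro v hv hvn hreach
  clear hvn
  revert hv
  induction hreach using Relation.ReflTransGen.head_induction_on with
  | refl => omega
  | @head a b hab _ ih =>
    intro hv
    have h1 := hvalid a b hab
    have h2 := hgap b
    exact ih (by omega)
end

section
/- Edmonds–Karp distance monotonicity: let f be a flow and let s = v_0, v_1, …, v_k = t be a shortest augmenting path (a residual path from s to t, with pairwise distinct vertices, such that no residual path from s to t has length less than k). Let δ = min_i r_f v_i v_{i+1} and let f' be obtained from f by adding δ to f v_i v_{i+1} and subtracting δ from f v_{i+1} v_i for each i, leaving all other pairs unchanged. Then residual distances from s do not decrease: for every vertex u and every residual path from s to u of length m with respect to f', there exists a residual path from s to u of length at most m with respect to f. -/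
open Finset

variable {V : Type*} [Fintype V] [DecidableEq V]

/-!
New residual edges created by the augmentation are reversals `(p (i+1), p i)` of edges of the
shortest path `p`. A shortest path visits `p j` at distance exactly `j`, so entering `p i` from
`p (i+1)` never beats the `f`-distance `i` of `p i`. Induction along an `f'`-residual path then
bounds each `f`-distance by the `f'`-distance.
-/

section ResidualPaths

omit [Fintype V] [DecidableEq V]

variable {c f : V → V → ℝ}

def ResidualReachableWithin (c f : V → V → ℝ) (a b : V) (n : ℕ) : Prop :=
  ∃ m ≤ n, ∃ q : Fin (m + 1) → V, IsResidualPath c f a b m q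

theorem IsResidualPath.residualReachableWithin {a b : V} {m : ℕ} {q : Fin (m + 1) → V}
    (hq : IsResidualPath c f a b m q) : ResidualReachableWithin c f a b m :=
  ⟨m, le_rfl, q, hq⟩

theorem ResidualReachableWithin.mono {a b : V} {n n' : ℕ} (h : ResidualReachableWithin c f a b n)
    (hn : n ≤ n') : ResidualReachableWithin c f a b n' :=
  let ⟨m, hm, q, hq⟩ := h
  ⟨m, hm.trans hn, q, hq⟩

theorem residualReachableWithin_refl (a : V) (n : ℕ) : ResidualReachableWithin c f a a n :=
  ⟨0, n.zero_le, fun _ => a, rfl, rfl, fun i => i.elim0⟩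

theorem IsResidualPath.eq_of_length_zero {a b : V} {q : Fin 1 → V}
    (hq : IsResidualPath c f a b 0 q) : a = b :=
  hq.1.symm.trans hq.2.1

theorem IsResidualPath.snoc {a b d : V} {m : ℕ} {q : Fin (m + 1) → V}
    (hq : IsResidualPath c f a b m q) (hbd : 0 < c b d - f b d) :
    IsResidualPath c f a d (m + 1) (Fin.snoc q d) := by
  obtain ⟨hstart, hend, hedge⟩ := hq
  refine ⟨by rw [← Fin.castSucc_zero, Fin.snoc_castSucc, hstart], Fin.snoc_last .., ?_⟩
  intro i
  induction i using Fin.lastCases with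
  | last => rwa [Fin.succ_last, Fin.snoc_last, Fin.snoc_castSucc, hend]
  | cast j => rw [Fin.succ_castSucc, Fin.snoc_castSucc, Fin.snoc_castSucc]; exact hedge j

theorem IsResidualPath.init {a b : V} {m : ℕ} {q : Fin (m + 2) → V}
    (hq : IsResidualPath c f a b (m + 1) q) :
    IsResidualPath c f a (q (Fin.last m).castSucc) m (Fin.init q) := by
  refine ⟨hq.1, rfl, fun i => ?_⟩
  simpa only [Fin.init, Fin.succ_castSucc] using hq.2.2 i.castSucc

theorem IsResidualPath.lastEdge {a b : V} {m : ℕ} {q : Fin (m + 2) → V}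
    (hq : IsResidualPath c f a b (m + 1) q) :
    0 < c (q (Fin.last m).castSucc) b - f (q (Fin.last m).castSucc) b := by
  simpa only [Fin.succ_last, hq.2.1] using hq.2.2 (Fin.last m)

theorem ResidualReachableWithin.snoc {a b d : V} {n : ℕ} (h : ResidualReachableWithin c f a b n)
    (hbd : 0 < c b d - f b d) : ResidualReachableWithin c f a d (n + 1) :=
  let ⟨m, hm, q, hq⟩ := h
  ⟨m + 1, by omega, _, hq.snoc hbd⟩

theorem ResidualReachableWithin.trans_isResidualPath {a b d : V} {n m : ℕ}
    (hab : ResidualReachableWithin c f a b n) {r : Fin (m + 1) → V}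
    (hbd : IsResidualPath c f b d m r) : ResidualReachableWithin c f a d (n + m) := by
  induction m generalizing d with
  | zero => simpa [← hbd.eq_of_length_zero] using hab
  | succ m ih => exact (ih hbd.init).snoc hbd.lastEdge

theorem ResidualReachableWithin.trans {a b d : V} {n n' : ℕ}
    (hab : ResidualReachableWithin c f a b n) (hbd : ResidualReachableWithin c f b d n') :
    ResidualReachableWithin c f a d (n + n') :=
  let ⟨_, hm, _, hr⟩ := hbd
  (hab.trans_isResidualPath hr).mono (by omega)

theorem IsResidualPath.segment {a b : V} {k : ℕ} {p : Fin (k + 1) → V}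
    (hp : IsResidualPath c f a b k p) (i j : Fin (k + 1)) (hij : i ≤ j) :
    IsResidualPath c f (p i) (p j) (j - i) (fun l => p ⟨i + l, by omega⟩) := by
  refine ⟨by simp, congrArg p (Fin.ext (show (i : ℕ) + (j - i) = j by omega)), fun l => ?_⟩
  convert hp.2.2 ⟨i + l, by omega⟩ using 4 <;> simp [Nat.add_assoc]

theorem IsResidualPath.residualReachableWithin_prefix {a b : V} {k : ℕ} {p : Fin (k + 1) → V}
    (hp : IsResidualPath c f a b k p) (j : Fin (k + 1)) :
    ResidualReachableWithin c f a (p j) j := by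
  simpa [hp.1] using (hp.segment 0 j (Fin.zero_le j)).residualReachableWithin

theorem IsResidualPath.residualReachableWithin_suffix {a b : V} {k : ℕ} {p : Fin (k + 1) → V}
    (hp : IsResidualPath c f a b k p) (j : Fin (k + 1)) :
    ResidualReachableWithin c f (p j) b (k - j) := by
  simpa [hp.2.1] using (hp.segment j (Fin.last k) (Fin.le_last j)).residualReachableWithin

theorem IsResidualPath.le_of_residualReachableWithin_of_shortest {s t : V} {k : ℕ}
    {p : Fin (k + 1) → V} (hp : IsResidualPath c f s t k p)
    (hshortest : ∀ (m : ℕ) (q : Fin (m + 1) → V), IsResidualPath c f s t m q → k ≤ m)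
    {j : Fin (k + 1)} {n : ℕ} (hj : ResidualReachableWithin c f s (p j) n) : (j : ℕ) ≤ n := by
  obtain ⟨m, hm, q, hq⟩ := hj.trans (hp.residualReachableWithin_suffix j)
  have := hshortest m q hq
  omega

theorem ResidualReachableWithin.of_isResidualPath {f' : V → V → ℝ} {a b : V} {m : ℕ}
    {q : Fin (m + 1) → V}
    (hstep : ∀ w u n, 0 < c w u - f' w u →
      ResidualReachableWithin c f a w n → ResidualReachableWithin c f a u (n + 1))
    (hq : IsResidualPath c f' a b m q) : ResidualReachableWithin c f a b m := by
  induction m generalizing b with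
  | zero => simpa [← hq.eq_of_length_zero] using residualReachableWithin_refl a 0
  | succ m ih => exact hstep _ _ _ hq.lastEdge (ih hq.init)

theorem residual_or_reversed_path_edge_of_residual_augment {f' : V → V → ℝ} {k : ℕ}
    {p : Fin (k + 1) → V}
    (hfwd : ∀ i : Fin k, f (p i.castSucc) (p i.succ) ≤ f' (p i.castSucc) (p i.succ))
    (hother : ∀ x y, (∀ i : Fin k,
        ¬(p i.castSucc = x ∧ p i.succ = y) ∧ ¬(p i.castSucc = y ∧ p i.succ = x)) →
      f' x y = f x y)
    {w u : V} (hwu : 0 < c w u - f' w u) :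
    0 < c w u - f w u ∨ ∃ i : Fin k, p i.castSucc = u ∧ p i.succ = w := by
  by_cases hrev : ∃ i : Fin k, p i.castSucc = u ∧ p i.succ = w
  · exact Or.inr hrev
  refine Or.inl (hwu.trans_le (sub_le_sub_left ?_ _))
  by_cases hmem : ∃ i : Fin k, p i.castSucc = w ∧ p i.succ = u
  · obtain ⟨i, rfl, rfl⟩ := hmem
    exact hfwd i
  · push Not at hrev hmem
    exact (hother w u fun i => ⟨fun h => hmem i h.1 h.2, fun h => hrev i h.1 h.2⟩).ge

end ResidualPaths

theorem edmonds_karp_distance_monotone_general (c : V → V → ℝ) (s t : V)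
    (f : V → V → ℝ)
    (k : ℕ) (hk : 0 < k) (p : Fin (k + 1) → V)
    (hp : IsResidualPath c f s t k p)
    (hshortest : ∀ (m : ℕ) (q : Fin (m + 1) → V), IsResidualPath c f s t m q → k ≤ m)
    (δ : ℝ)
    (hδ : δ = (Finset.univ : Finset (Fin k)).inf'
      (Finset.univ_nonempty_iff.mpr (Fin.pos_iff_nonempty.mp hk))
      (fun i => c (p i.castSucc) (p i.succ) - f (p i.castSucc) (p i.succ)))
    (f' : V → V → ℝ)
    (hf'fwd : ∀ i : Fin k, f' (p i.castSucc) (p i.succ) = f (p i.castSucc) (p i.succ) + δ)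
    (hf'other : ∀ x y, (∀ i : Fin k,
        ¬(p i.castSucc = x ∧ p i.succ = y) ∧ ¬(p i.castSucc = y ∧ p i.succ = x)) →
      f' x y = f x y) :
    ∀ (u : V) (m : ℕ) (q : Fin (m + 1) → V), IsResidualPath c f' s u m q →
      ∃ m' ≤ m, ∃ q' : Fin (m' + 1) → V, IsResidualPath c f s u m' q' := by
  have hδ_pos : 0 < δ := hδ ▸ (Finset.lt_inf'_iff _).mpr fun i _ => hp.2.2 i
  have hfwd (i : Fin k) : f (p i.castSucc) (p i.succ) ≤ f' (p i.castSucc) (p i.succ) := by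
    linarith [hf'fwd i]
  intro u m q hq
  refine ResidualReachableWithin.of_isResidualPath (fun w v n hwv hw => ?_) hq
  rcases residual_or_reversed_path_edge_of_residual_augment hfwd hf'other hwv with
    hres | ⟨i, rfl, rfl⟩
  · exact hw.snoc hres
  · have hi : (i : ℕ) + 1 ≤ n := hp.le_of_residualReachableWithin_of_shortest hshortest hw
    exact (hp.residualReachableWithin_prefix i.castSucc).mono (by rw [Fin.val_castSucc]; omega)

/-- Edmonds–Karp monotonicity: after augmenting along a shortest augmenting
path, residual distances from the source do not decrease. -/
theorem edmonds_karp_distance_monotone (c : V → V → ℝ) (s t : V) (hst : s ≠ t)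
    (hc : ∀ u v, 0 ≤ c u v) (f : V → V → ℝ) (hf : IsFlow c s t f)
    (k : ℕ) (hk : 0 < k) (p : Fin (k + 1) → V)
    (hp : IsResidualPath c f s t k p) (hinj : Function.Injective p)
    (hshortest : ∀ (m : ℕ) (q : Fin (m + 1) → V), IsResidualPath c f s t m q → k ≤ m)
    (δ : ℝ)
    (hδ : δ = (Finset.univ : Finset (Fin k)).inf'
      (Finset.univ_nonempty_iff.mpr (Fin.pos_iff_nonempty.mp hk))
      (fun i => c (p i.castSucc) (p i.succ) - f (p i.castSucc) (p i.succ)))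
    (f' : V → V → ℝ)
    (hf'fwd : ∀ i : Fin k, f' (p i.castSucc) (p i.succ) = f (p i.castSucc) (p i.succ) + δ)
    (hf'bwd : ∀ i : Fin k, f' (p i.succ) (p i.castSucc) = f (p i.succ) (p i.castSucc) - δ)
    (hf'other : ∀ x y, (∀ i : Fin k,
        ¬(p i.castSucc = x ∧ p i.succ = y) ∧ ¬(p i.castSucc = y ∧ p i.succ = x)) →
      f' x y = f x y) :
    ∀ (u : V) (m : ℕ) (q : Fin (m + 1) → V), IsResidualPath c f' s u m q →
      ∃ m' ≤ m, ∃ q' : Fin (m' + 1) → V, IsResidualPath c f s u m' q' :=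
  edmonds_karp_distance_monotone_general c s t f k hk p hp hshortest δ hδ f' hf'fwd hf'other
end
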